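/- The successor iso on encoded integers is correct: applying the iso ω_S = { inl () ↔ inr(inl(fold(inl ()))) ; inr(inl x) ↔ inr(inl(fold(inr x))) ; inr(inr(fold(inl ()))) ↔ inl () ; inr(inr(fold(inr x))) ↔ inr(inr x) } to the encoding n̄ of any integer n ∈ ℤ evaluates to the encoding of n+1, i.e., ω_S n̄ →* (n+1)̄. -/
import Mathlib


namespace LinRev

/-! ## Types of the linear reversible language:  A ::= 1 | A⊕B | A⊗B | μX.A | X  -/

inductive Ty : Type
  | one : Ty
  | sum : Ty → Ty → Ty
  | prod : Ty → Ty → Ty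
  | mu : Ty → Ty
  | tvar : ℕ → Ty
  deriving DecidableEq

/-- Substitute type `T` for the (de Bruijn) type variable `n` in a type. -/
def Ty.substF : Ty → ℕ → Ty → Ty
  | .one, _, _ => .one
  | .sum A B, n, T => .sum (A.substF n T) (B.substF n T)
  | .prod A B, n, T => .prod (A.substF n T) (B.substF n T)
  | .mu A, n, T => .mu (A.substF (n + 1) T)
  | .tvar m, n, T => if m = n then T else .tvar m

/-- `A[X ← μX.A]`, the one-step unfolding of `μX.A` with body `A`. -/
def Ty.unfold (A : Ty) : Ty := A.substF 0 (.mu A)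

/-! ## Values:  v ::= () | x | inl v | inr v | ⟨v,v⟩ | fold v  -/

inductive Val : Type
  | unit : Val
  | var : ℕ → Val
  | inl : Val → Val
  | inr : Val → Val
  | pair : Val → Val → Val
  | fold : Val → Val
  deriving DecidableEq

/-- Free variables of a value. -/
def Val.fv : Val → Finset ℕ
  | .unit => ∅
  | .var x => {x}
  | .inl v => v.fv
  | .inr v => v.fv
  | .pair v w => v.fv ∪ w.fv
  | .fold v => v.fv

/-! ## Substitutions -/

/-- A substitution: a partial map from variables to values. -/
abbrev Sub := ℕ → Option Val

/-- The support of a substitution. -/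
def Sub.supp (σ : Sub) : Set ℕ := {x | σ x ≠ none}

/-- Disjointness of supports. -/
def Sub.disj (σ₁ σ₂ : Sub) : Prop := ∀ x, σ₁ x = none ∨ σ₂ x = none

/-- Union of two substitutions. -/
def Sub.union (σ₁ σ₂ : Sub) : Sub := fun x => (σ₁ x).orElse (fun _ => σ₂ x)

/-- Applying a substitution to a value. -/
def Val.applySub (σ : Sub) : Val → Val
  | .unit => .unit
  | .var x => (σ x).getD (.var x)
  | .inl v => .inl (v.applySub σ)
  | .inr v => .inr (v.applySub σ)
  | .pair v w => .pair (v.applySub σ) (w.applySub σ)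
  | .fold v => .fold (v.applySub σ)

/-- The pattern-matching judgment `σ[p] = v`. -/
inductive Matches : Sub → Val → Val → Prop
  | unit : Matches (fun _ => none) .unit .unit
  | var (x : ℕ) (v : Val) :
      Matches (fun y => if y = x then some v else none) (.var x) v
  | inl {σ p v} : Matches σ p v → Matches σ (.inl p) (.inl v)
  | inr {σ p v} : Matches σ p v → Matches σ (.inr p) (.inr v)
  | fold {σ p v} : Matches σ p v → Matches σ (.fold p) (.fold v)
  | pair {σ₁ σ₂ p₁ p₂ v₁ v₂} :
      Matches σ₁ p₁ v₁ → Matches σ₂ p₂ v₂ → Sub.disj σ₁ σ₂ →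
      Matches (σ₁.union σ₂) (.pair p₁ p₂) (.pair v₁ v₂)

/-! ## The exhaustivity/non-overlapping predicate `OD_A(S)` -/

def proj1 (S : Set Val) : Set Val := {v | ∃ w, Val.pair v w ∈ S}
def proj2 (S : Set Val) : Set Val := {w | ∃ v, Val.pair v w ∈ S}
def sect1 (S : Set Val) (v : Val) : Set Val := {w | Val.pair v w ∈ S}
def sect2 (S : Set Val) (w : Val) : Set Val := {v | Val.pair v w ∈ S}

inductive OD : Ty → Set Val → Prop
  | var (A : Ty) (x : ℕ) : OD A {Val.var x}
  | unit : OD .one {Val.unit}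
  | sum {A B : Ty} {S T : Set Val} :
      OD A S → OD B T → OD (.sum A B) (Val.inl '' S ∪ Val.inr '' T)
  | mu {A : Ty} {S : Set Val} :
      OD A.unfold S → OD (.mu A) (Val.fold '' S)
  | prodL {A B : Ty} {S : Set Val} :
      (∀ u ∈ S, ∃ v w, u = Val.pair v w) →
      OD A (proj1 S) → (∀ v ∈ proj1 S, OD B (sect1 S v)) →
      OD (.prod A B) S
  | prodR {A B : Ty} {S : Set Val} :
      (∀ u ∈ S, ∃ v w, u = Val.pair v w) →
      OD B (proj2 S) → (∀ w ∈ proj2 S, OD A (sect2 S w)) →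
      OD (.prod A B) S

/-! ## Linear typing contexts (variables, at most one occurrence each) -/

abbrev Ctx := ℕ → Option Ty

def Ctx.empty : Ctx := fun _ => none
def Ctx.single (x : ℕ) (A : Ty) : Ctx := fun y => if y = x then some A else none
def Ctx.disj (Γ Δ : Ctx) : Prop := ∀ x, Γ x = none ∨ Δ x = none
def Ctx.union (Γ Δ : Ctx) : Ctx := fun x => (Γ x).orElse (fun _ => Δ x)
def Ctx.unions (L : List Ctx) : Ctx := L.foldr Ctx.union Ctx.empty

/-- Linear typing of values: `Δ ⊢ v : A`. -/
inductive VTy : Ctx → Val → Ty → Prop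
  | unit : VTy Ctx.empty .unit .one
  | var (x : ℕ) (A : Ty) : VTy (Ctx.single x A) (.var x) A
  | inl {Γ v A B} : VTy Γ v A → VTy Γ (.inl v) (.sum A B)
  | inr {Γ v A B} : VTy Γ v B → VTy Γ (.inr v) (.sum A B)
  | fold {Γ v A} : VTy Γ v A.unfold → VTy Γ (.fold v) (.mu A)
  | pair {Γ Δ v w A B} :
      VTy Γ v A → VTy Δ w B → Ctx.disj Γ Δ →
      VTy (Γ.union Δ) (.pair v w) (.prod A B)

end LinRev
namespace LinRev

/-! ## Patterns, terms, isos -/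

inductive Pat : Type
  | pvar : ℕ → Pat
  | ppair : Pat → Pat → Pat
  deriving DecidableEq

def Pat.toVal : Pat → Val
  | .pvar x => .var x
  | .ppair p q => .pair p.toVal q.toVal

def Pat.vars : Pat → Finset ℕ
  | .pvar x => {x}
  | .ppair p q => p.vars ∪ q.vars

mutual
  inductive Term : Type
    | unit : Term
    | var : ℕ → Term
    | inl : Term → Term
    | inr : Term → Term
    | pair : Term → Term → Term
    | fold : Term → Term
    | app : Iso → Term → Term
    | lett : Pat → Term → Term → Term

  inductive Iso : Type
    | clauses : Clauses → Iso
    | fixI : ℕ → Iso → Iso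
    | ivar : ℕ → Iso

  inductive Clauses : Type
    | nil : Clauses
    | cons : Val → Term → Clauses → Clauses
end

def Clauses.toList : Clauses → List (Val × Term)
  | .nil => []
  | .cons v e r => (v, e) :: r.toList

def Val.toTerm : Val → Term
  | .unit => .unit
  | .var x => .var x
  | .inl v => .inl v.toTerm
  | .inr v => .inr v.toTerm
  | .pair v w => .pair v.toTerm w.toTerm
  | .fold v => .fold v.toTerm

def Pat.toTerm (p : Pat) : Term := p.toVal.toTerm

def Term.asVal : Term → Option Val
  | .unit => some .unit
  | .var x => some (.var x)
  | .inl t => t.asVal.map .inl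
  | .inr t => t.asVal.map .inr
  | .pair a b =>
      match a.asVal, b.asVal with
      | some v, some w => some (.pair v w)
      | _, _ => none
  | .fold t => t.asVal.map .fold
  | _ => none

def Term.asPat : Term → Option Pat
  | .var x => some (.pvar x)
  | .pair a b =>
      match a.asPat, b.asPat with
      | some p, some q => some (.ppair p q)
      | _, _ => none
  | _ => none

/-- `Val(e)`: the value at the end of a chain of lets. -/
def Term.valOf : Term → Option Val
  | .lett _ _ t₂ => t₂.valOf
  | t => t.asVal

/-- Free (term) variables of a term. -/
def Term.fvT : Term → Finset ℕ
  | .unit => ∅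
  | .var x => {x}
  | .inl t => t.fvT
  | .inr t => t.fvT
  | .fold t => t.fvT
  | .pair a b => a.fvT ∪ b.fvT
  | .app _ t => t.fvT
  | .lett p a b => a.fvT ∪ (b.fvT \ p.vars)

/-- Applying a (value) substitution to a term. -/
def Term.applySub (σ : Sub) : Term → Term
  | .unit => .unit
  | .var x => ((σ x).map Val.toTerm).getD (.var x)
  | .inl t => .inl (t.applySub σ)
  | .inr t => .inr (t.applySub σ)
  | .pair a b => .pair (a.applySub σ) (b.applySub σ)
  | .fold t => .fold (t.applySub σ)
  | .app ω t => .app ω (t.applySub σ)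
  | .lett p a b => .lett p (a.applySub σ) (b.applySub σ)

/-! ## Substitution of iso-variables -/

mutual
  def Term.isoSub (f : ℕ) (w : Iso) : Term → Term
    | .unit => .unit
    | .var x => .var x
    | .inl t => .inl (Term.isoSub f w t)
    | .inr t => .inr (Term.isoSub f w t)
    | .pair a b => .pair (Term.isoSub f w a) (Term.isoSub f w b)
    | .fold t => .fold (Term.isoSub f w t)
    | .app ω t => .app (Iso.isoSub f w ω) (Term.isoSub f w t)
    | .lett p a b => .lett p (Term.isoSub f w a) (Term.isoSub f w b)
  termination_by t => sizeOf t

  def Iso.isoSub (f : ℕ) (w : Iso) : Iso → Iso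
    | .ivar g => if g = f then w else .ivar g
    | .fixI g ω => if g = f then .fixI g ω else .fixI g (Iso.isoSub f w ω)
    | .clauses l => .clauses (Clauses.isoSub f w l)
  termination_by ω => sizeOf ω

  def Clauses.isoSub (f : ℕ) (w : Iso) : Clauses → Clauses
    | .nil => .nil
    | .cons v e r => .cons v (Term.isoSub f w e) (Clauses.isoSub f w r)
  termination_by l => sizeOf l
end

/-! ## Inversion of isos -/

mutual
  /-- The dual iso `ω⊥`. -/
  def Iso.inv : Iso → Iso
    | .ivar f => .ivar f
    | .fixI f ω => .fixI f ω.inv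
    | .clauses l => .clauses l.inv
  termination_by ω => sizeOf ω

  def Clauses.inv : Clauses → Clauses
    | .nil => .nil
    | .cons v e r =>
        match invAux (Val.toTerm v) e with
        | some (v', e') => .cons v' e' r.inv
        | none => .cons v e r.inv
  termination_by l => sizeOf l

  /-- Invert a clause body `let p₁ = ω₁ p₁' in … let pₙ = ωₙ pₙ' in v'`,
  reversing the lets and inverting each sub-iso; `acc` accumulates the result. -/
  def invAux : Term → Term → Option (Val × Term)
    | acc, .lett p (.app ω t) e =>
        match t.asPat with
        | some p' => invAux (.lett p' (.app ω.inv p.toTerm) acc) e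
        | none => none
    | acc, t => t.asVal.map (fun v' => (v', acc))
  termination_by _ e => sizeOf e
end

end LinRev
namespace LinRev

/-! ## Operational semantics (deterministic call-by-value) -/

inductive Step : Term → Term → Prop
  | inlC {t t'} : Step t t' → Step (.inl t) (.inl t')
  | inrC {t t'} : Step t t' → Step (.inr t) (.inr t')
  | foldC {t t'} : Step t t' → Step (.fold t) (.fold t')
  | pairL {t t'} (v : Val) : Step t t' → Step (.pair t v.toTerm) (.pair t' v.toTerm)
  | pairR {t t'} (v : Val) : Step t t' → Step (.pair v.toTerm t) (.pair v.toTerm t')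
  | appC {ω t t'} : Step t t' → Step (.app ω t) (.app ω t')
  | lettC {p t₁ t₁' t₂} : Step t₁ t₁' → Step (.lett p t₁ t₂) (.lett p t₁' t₂)
  | isoRec {f ω t} :
      Step (.app (.fixI f ω) t) (.app (Iso.isoSub f (.fixI f ω) ω) t)
  | lettE {σ : Sub} {p : Pat} {v : Val} {t : Term} :
      Matches σ p.toVal v → Step (.lett p v.toTerm t) (t.applySub σ)
  | isoApp {σ : Sub} {l : Clauses} {vi : Val} {e : Term} {v : Val} :
      (vi, e) ∈ l.toList → Matches σ vi v →
      Step (.app (.clauses l) v.toTerm) (e.applySub σ)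

/-- Reflexive-transitive closure `→*`. -/
def Steps : Term → Term → Prop := Relation.ReflTransGen Step

/-! ## Structural recursion criterion -/

/-- Flatten a right-nested tensor type into its components. -/
def Ty.tuple : Ty → List Ty
  | .prod A B => A :: B.tuple
  | A => [A]

/-- Flatten a right-nested pair value into its components. -/
def Val.tuple : Val → List Val
  | .pair a b => a :: b.tuple
  | v => [v]

/-- If a term is a tuple of variables `(x₁, …, xₘ)`, return the variables. -/
def Term.tupleVars : Term → Option (List ℕ)
  | .var x => some [x]
  | .pair (.var x) t => t.tupleVars.map (x :: ·)
  | _ => none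

/-- Subterm relation on values. -/
inductive Val.SubV : Val → Val → Prop
  | refl (v : Val) : Val.SubV v v
  | inl {u v} : Val.SubV u v → Val.SubV u (.inl v)
  | inr {u v} : Val.SubV u v → Val.SubV u (.inr v)
  | fold {u v} : Val.SubV u v → Val.SubV u (.fold v)
  | pairL {u v w} : Val.SubV u v → Val.SubV u (.pair v w)
  | pairR {u v w} : Val.SubV u w → Val.SubV u (.pair v w)

/- `RecCallT f p t` : the recursive call `f p` occurs as a subterm of `t`. -/
mutual
  inductive RecCallT : ℕ → Term → Term → Prop
    | here (f : ℕ) (p : Term) : RecCallT f p (.app (.ivar f) p)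
    | inl {f p t} : RecCallT f p t → RecCallT f p (.inl t)
    | inr {f p t} : RecCallT f p t → RecCallT f p (.inr t)
    | fold {f p t} : RecCallT f p t → RecCallT f p (.fold t)
    | pairL {f p t₁ t₂} : RecCallT f p t₁ → RecCallT f p (.pair t₁ t₂)
    | pairR {f p t₁ t₂} : RecCallT f p t₂ → RecCallT f p (.pair t₁ t₂)
    | appIso {f p ω t} : RecCallI f p ω → RecCallT f p (.app ω t)
    | appArg {f p ω t} : RecCallT f p t → RecCallT f p (.app ω t)
    | lett₁ {f p q t₁ t₂} : RecCallT f p t₁ → RecCallT f p (.lett q t₁ t₂)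
    | lett₂ {f p q t₁ t₂} : RecCallT f p t₂ → RecCallT f p (.lett q t₁ t₂)

  inductive RecCallI : ℕ → Term → Iso → Prop
    | clauses {f p l} : RecCallC f p l → RecCallI f p (.clauses l)
    | fixI {f g p ω} : RecCallI f p ω → g ≠ f → RecCallI f p (.fixI g ω)

  inductive RecCallC : ℕ → Term → Clauses → Prop
    | head {f p v e r} : RecCallT f p e → RecCallC f p (.cons v e r)
    | tail {f p v e r} : RecCallC f p r → RecCallC f p (.cons v e r)
end

/-- The structural recursion criterion for `fix f. {vᵢ ↔ eᵢ} : A ↔ C`: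
some component `Aⱼ = μX.B` of the input type is such that in every clause,
if the `j`-th component of the pattern is closed there is no recursive call,
and otherwise every recursive call `f p` has `p` a tuple of variables whose
`j`-th component is a strict subterm of the `j`-th pattern component. -/
def StructRecClauses (f : ℕ) (l : Clauses) (A : Ty) : Prop :=
  ∃ (j : ℕ) (B : Ty), A.tuple[j]? = some (Ty.mu B) ∧
    ∀ c ∈ l.toList, ∃ vj, (Val.tuple c.1)[j]? = some vj ∧
      ((vj.fv = ∅ ∧ ∀ p, ¬ RecCallT f p c.2) ∨
       (∀ p, RecCallT f p c.2 → ∃ xs : List ℕ,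
          p.tupleVars = some xs ∧ xs.length = A.tuple.length ∧
          ∃ x, xs[j]? = some x ∧ Val.SubV (.var x) vj ∧ Val.var x ≠ vj))

/-! ## Typing of terms and isos -/

/-- An iso-variable context: at most one iso-variable `f : A ↔ B`. -/
abbrev IsoCtx := Option (ℕ × Ty × Ty)

/-- Typing of let-patterns, producing the context of bound variables. -/
inductive PatTy : Pat → Ty → Ctx → Prop
  | pvar (x : ℕ) (A : Ty) : PatTy (.pvar x) A (Ctx.single x A)
  | ppair {p q A B Γ Δ} :
      PatTy p A Γ → PatTy q B Δ → Ctx.disj Γ Δ →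
      PatTy (.ppair p q) (.prod A B) (Γ.union Δ)

mutual
  /-- Typing of terms: `Δ; Ψ ⊢ t : A`. -/
  inductive TermTy : Ctx → IsoCtx → Term → Ty → Prop
    | unit (Ψ : IsoCtx) : TermTy Ctx.empty Ψ .unit .one
    | var (x : ℕ) (A : Ty) (Ψ : IsoCtx) : TermTy (Ctx.single x A) Ψ (.var x) A
    | inl {Γ Ψ t A B} : TermTy Γ Ψ t A → TermTy Γ Ψ (.inl t) (.sum A B)
    | inr {Γ Ψ t A B} : TermTy Γ Ψ t B → TermTy Γ Ψ (.inr t) (.sum A B)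
    | fold {Γ Ψ t A} : TermTy Γ Ψ t A.unfold → TermTy Γ Ψ (.fold t) (.mu A)
    | pair {Γ Δ Ψ t₁ t₂ A B} :
        TermTy Γ Ψ t₁ A → TermTy Δ Ψ t₂ B → Ctx.disj Γ Δ →
        TermTy (Γ.union Δ) Ψ (.pair t₁ t₂) (.prod A B)
    | appV {Γ Ψ ω t A B} :
        IsoTy Ψ ω A B → TermTy Γ Ψ t A → TermTy Γ Ψ (.app ω t) B
    | appC {Γ Ψ ω t A B} :
        IsoTy none ω A B → TermTy Γ Ψ t A → TermTy Γ Ψ (.app ω t) B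
    | lett {Γ Δ Ξ Ψ p t₁ t₂ A B} :
        TermTy Γ Ψ t₁ A → PatTy p A Ξ → TermTy (Δ.union Ξ) Ψ t₂ B →
        Ctx.disj Γ Δ → Ctx.disj Δ Ξ →
        TermTy (Γ.union Δ) Ψ (.lett p t₁ t₂) B

  /-- Typing of isos: `Ψ ⊢ ω : A ↔ B`. -/
  inductive IsoTy : IsoCtx → Iso → Ty → Ty → Prop
    | ivar (f : ℕ) (A B : Ty) : IsoTy (some (f, A, B)) (.ivar f) A B
    | fixI {f ω A B} (Ψ : IsoCtx) :
        IsoTy (some (f, A, B)) ω A B →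
        (∀ l, ω = .clauses l → StructRecClauses f l A) →
        IsoTy Ψ (.fixI f ω) A B
    | clauses {Ψ l A B} (Γof : Val × Term → Ctx) :
        (∀ c ∈ Clauses.toList l, VTy (Γof c) c.1 A) →
        (∀ c ∈ Clauses.toList l, TermTy (Γof c) Ψ c.2 B) →
        OD A {v | ∃ e, (v, e) ∈ Clauses.toList l} →
        OD B {w | ∃ c ∈ Clauses.toList l, Term.valOf c.2 = some w} →
        IsoTy Ψ (.clauses l) A B
end

/-! ## Explicit substitutions -/

/-- The substitution determined by an association list. -/
def Sub.ofList (L : List (ℕ × Val)) : Sub :=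
  fun x => (L.find? (fun p => p.1 = x)).map Prod.snd

/-- `let σ in t` : a nested sequence of lets, one per binding. -/
def letSig (L : List (ℕ × Val)) (t : Term) : Term :=
  L.foldr (fun xv acc => .lett (.pvar xv.1) xv.2.toTerm acc) t

/-- The explicit let-propagation rules `→ₑₗₑₜ`. -/
inductive ELet : Term → Term → Prop
  | letvar {x : ℕ} {v : Val} : ELet (.lett (.pvar x) v.toTerm (.var x)) v.toTerm
  | letpair {x : ℕ} {p : Pat} {t₁ t₂ t : Term} :
      ELet (.lett (.ppair (.pvar x) p) (.pair t₁ t₂) t)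
           (.lett (.pvar x) t₁ (.lett p t₂ t))
  | pairL {x : ℕ} {v : Val} {t₁ t₂ : Term} : x ∈ t₁.fvT →
      ELet (.lett (.pvar x) v.toTerm (.pair t₁ t₂))
           (.pair (.lett (.pvar x) v.toTerm t₁) t₂)
  | pairR {x : ℕ} {v : Val} {t₁ t₂ : Term} : x ∈ t₂.fvT →
      ELet (.lett (.pvar x) v.toTerm (.pair t₁ t₂))
           (.pair t₁ (.lett (.pvar x) v.toTerm t₂))
  | inl {x : ℕ} {v : Val} {t : Term} :
      ELet (.lett (.pvar x) v.toTerm (.inl t)) (.inl (.lett (.pvar x) v.toTerm t))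
  | inr {x : ℕ} {v : Val} {t : Term} :
      ELet (.lett (.pvar x) v.toTerm (.inr t)) (.inr (.lett (.pvar x) v.toTerm t))
  | fold {x : ℕ} {v : Val} {t : Term} :
      ELet (.lett (.pvar x) v.toTerm (.fold t)) (.fold (.lett (.pvar x) v.toTerm t))
  | app {x : ℕ} {v : Val} {ω : Iso} {t : Term} :
      ELet (.lett (.pvar x) v.toTerm (.app ω t)) (.app ω (.lett (.pvar x) v.toTerm t))

/-- The explicit-substitution reduction `→_{eβ}`. -/
inductive EBeta : Term → Term → Prop
  | elet {t t'} : ELet t t' → EBeta t t'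
  | inlC {t t'} : EBeta t t' → EBeta (.inl t) (.inl t')
  | inrC {t t'} : EBeta t t' → EBeta (.inr t) (.inr t')
  | foldC {t t'} : EBeta t t' → EBeta (.fold t) (.fold t')
  | pairL {t t'} (v : Val) : EBeta t t' → EBeta (.pair t v.toTerm) (.pair t' v.toTerm)
  | pairR {t t'} (v : Val) : EBeta t t' → EBeta (.pair v.toTerm t) (.pair v.toTerm t')
  | appC {ω t t'} : EBeta t t' → EBeta (.app ω t) (.app ω t')
  | lettC {p t₁ t₁' t₂} : EBeta t₁ t₁' → EBeta (.lett p t₁ t₂) (.lett p t₁' t₂)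
  | isoRec {f ω t} :
      EBeta (.app (.fixI f ω) t) (.app (Iso.isoSub f (.fixI f ω) ω) t)
  | lettE {L : List (ℕ × Val)} {p : Pat} {v : Val} {t : Term} :
      Matches (Sub.ofList L) p.toVal v → EBeta (.lett p v.toTerm t) (letSig L t)
  | isoApp {L : List (ℕ × Val)} {l : Clauses} {vi : Val} {e : Term} {v : Val} :
      (vi, e) ∈ l.toList → Matches (Sub.ofList L) vi v →
      EBeta (.app (.clauses l) v.toTerm) (letSig L e)

end LinRev
namespace LinRev

/-! ## Encoding of integers -/

/-- `npos = μX. 1 ⊕ X`, the type of strictly positive naturals. -/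
def nposTy : Ty := .mu (.sum .one (.tvar 0))

/-- `Z = 1 ⊕ (npos ⊕ npos)`, the type of integers. -/
def ZTy : Ty := .sum .one (.sum nposTy nposTy)

/-- `enpos n` encodes the strictly positive natural `n+1 : npos`. -/
def enpos : ℕ → Val
  | 0 => .fold (.inl .unit)
  | n + 1 => .fold (.inr (enpos n))

/-- `encZ z` encodes the integer `z : Z`. -/
def encZ (z : ℤ) : Val :=
  if 0 < z then .inr (.inl (enpos (z.natAbs - 1)))
  else if z = 0 then .inl .unit
  else .inr (.inr (enpos (z.natAbs - 1)))

/-- The successor iso on encoded integers. -/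
def succIso : Iso := .clauses
  (.cons (.inl .unit) ((Val.inr (.inl (.fold (.inl .unit)))).toTerm)
  (.cons (.inr (.inl (.var 0))) ((Val.inr (.inl (.fold (.inr (.var 0))))).toTerm)
  (.cons (.inr (.inr (.fold (.inl .unit)))) ((Val.inl .unit).toTerm)
  (.cons (.inr (.inr (.fold (.inr (.var 0))))) ((Val.inr (.inr (.var 0))).toTerm)
   .nil))))

end LinRev

namespace LinRev

lemma applySub_toTerm (σ : Sub) (v : Val) :
    (Val.toTerm v).applySub σ = Val.toTerm (v.applySub σ) := by
  induction v with
  | unit => rfl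
  | var x => simp only [Val.toTerm, Term.applySub, Val.applySub]; cases σ x <;> rfl
  | inl v ih => simp [Val.toTerm, Term.applySub, Val.applySub, ih]
  | inr v ih => simp [Val.toTerm, Term.applySub, Val.applySub, ih]
  | pair v w ihv ihw => simp [Val.toTerm, Term.applySub, Val.applySub, ihv, ihw]
  | fold v ih => simp [Val.toTerm, Term.applySub, Val.applySub, ih]

/-- the substitution mapping variable 0 to `v`. -/
def sub0 (v : Val) : Sub := fun y => if y = 0 then some v else none

lemma step_succIso (v : Val) (e : Term) (σ : Sub) (vi : Val)
    (hmem : (vi, e) ∈ (Clauses.toList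
      (.cons (.inl .unit) ((Val.inr (.inl (.fold (.inl .unit)))).toTerm)
      (.cons (.inr (.inl (.var 0))) ((Val.inr (.inl (.fold (.inr (.var 0))))).toTerm)
      (.cons (.inr (.inr (.fold (.inl .unit)))) ((Val.inl .unit).toTerm)
      (.cons (.inr (.inr (.fold (.inr (.var 0))))) ((Val.inr (.inr (.var 0))).toTerm)
       .nil))))))
    (hm : Matches σ vi v) :
    Step (.app succIso v.toTerm) (e.applySub σ) :=
  Step.isoApp hmem hm

end LinRev

open LinRev in
/-- The successor iso is correct: applying `ω_S` to the
encoding `n̄` of any integer `n` evaluates to the encoding of `n+1`. -/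
theorem succ_iso_correct (z : ℤ) :
    Steps (.app succIso (encZ z).toTerm) ((encZ (z + 1)).toTerm) := by
  refine Relation.ReflTransGen.single ?_
  rcases z with n | n
  · cases n with
    | zero =>
      have h := step_succIso (.inl .unit) ((Val.inr (.inl (.fold (.inl .unit)))).toTerm)
        (fun _ => none) (.inl .unit)
        (by simp [Clauses.toList]) (Matches.inl Matches.unit)
      have e1 : encZ (Int.ofNat 0) = .inl .unit := by simp [encZ]
      have e2 : Term.applySub (fun _ => none)
          ((Val.inr (.inl (.fold (.inl .unit)))).toTerm)
          = (encZ (Int.ofNat 0 + 1)).toTerm := by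
        simp [applySub_toTerm, Val.applySub, encZ, enpos]
      rw [e1, ← e2]; exact h
    | succ n =>
      have h := step_succIso (.inr (.inl (enpos n)))
        ((Val.inr (.inl (.fold (.inr (.var 0))))).toTerm) (sub0 (enpos n)) _
        (by simp [Clauses.toList])
        (Matches.inr (Matches.inl (Matches.var 0 (enpos n))))
      have e1 : encZ (Int.ofNat (n + 1)) = .inr (.inl (enpos n)) := by
        have h1 : ((n:ℤ) + 1).natAbs - 1 = n := by omega
        have h2 : (0:ℤ) < (n:ℤ) + 1 := by omega
        simp [encZ, h1, h2]
      have e2 : Term.applySub (sub0 (enpos n))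
          ((Val.inr (.inl (.fold (.inr (.var 0))))).toTerm)
          = (encZ (Int.ofNat (n + 1) + 1)).toTerm := by
        have h3 : ((n:ℤ) + 1 + 1).natAbs - 1 = n + 1 := by omega
        have h4 : (0:ℤ) < (n:ℤ) + 1 + 1 := by omega
        simp [applySub_toTerm, Val.applySub, encZ, sub0, h3, h4, enpos]
      rw [e1, ← e2]; exact h
  · cases n with
    | zero =>
      have h := step_succIso (.inr (.inr (.fold (.inl .unit))))
        ((Val.inl .unit).toTerm) (fun _ => none) _
        (by simp [Clauses.toList])
        (Matches.inr (Matches.inr (Matches.fold (Matches.inl Matches.unit))))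
      have e1 : encZ (Int.negSucc 0) = .inr (.inr (.fold (.inl .unit))) := by
        simp [encZ, enpos]
      have e2 : Term.applySub (fun _ => none) ((Val.inl .unit).toTerm)
          = (encZ (Int.negSucc 0 + 1)).toTerm := by
        simp [applySub_toTerm, Val.applySub, encZ]
      rw [e1, ← e2]; exact h
    | succ n =>
      have h := step_succIso (.inr (.inr (.fold (.inr (enpos n)))))
        ((Val.inr (.inr (.var 0))).toTerm) (sub0 (enpos n)) _
        (by simp [Clauses.toList])
        (Matches.inr (Matches.inr (Matches.fold (Matches.inr (Matches.var 0 (enpos n))))))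
      have e1 : encZ (Int.negSucc (n + 1)) = .inr (.inr (.fold (.inr (enpos n)))) := by
        have h2 : (Int.negSucc (n + 1)).natAbs - 1 = n + 1 := by
          simp [Int.negSucc_eq]; omega
        have h5 : ¬ (0:ℤ) < Int.negSucc (n + 1) := by simp [Int.negSucc_eq]; omega
        have h6 : Int.negSucc (n + 1) ≠ 0 := by simp [Int.negSucc_eq]; omega
        simp [encZ, h2, h5, h6, enpos]
      have e2 : Term.applySub (sub0 (enpos n))
          ((Val.inr (.inr (.var 0))).toTerm)
          = (encZ (Int.negSucc (n + 1) + 1)).toTerm := by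
        have h1 : Int.negSucc (n + 1) + 1 = Int.negSucc n := by
          simp [Int.negSucc_eq]
        have h2 : (Int.negSucc n).natAbs - 1 = n := by simp [Int.negSucc_eq]; omega
        have h5 : ¬ (0:ℤ) < Int.negSucc n := by simp [Int.negSucc_eq]
        have h6 : Int.negSucc n ≠ 0 := by simp [Int.negSucc_eq]; omega
        simp [applySub_toTerm, Val.applySub, encZ, sub0, h1, h2, h5, h6]
      rw [e1, ← e2]; exact h
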